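/- Let H be a cocommutative weak Hopf algebra, (B,φ_B) a left weak H-module algebra with φ_B being φ_B-invertible. If ω ∈ Reg_{φ_B}(H^{⊗n},B) satisfies ω̄ ∧ φ_B^{⊗n} = ω̄^{op} ∧ φ_B^{⊗n}, then its convolution inverse ω^{-1} also satisfies (ω^{-1})‾ ∧ φ_B^{⊗n} = (ω^{-1})‾^{op} ∧ φ_B^{⊗n}; consequently ω^{-1} also factors through the center of B. -/

import Mathlib

open TensorProduct LinearMap

noncomputable section

namespace WK

/-- A weak bialgebra structure on a `k`-module `H`. -/
structure WeakBialgebraStr (k : Type) [CommRing k] (H : Type) [AddCommGroup H] [Module k H] :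
    Type where
  mu : H ⊗[k] H →ₗ[k] H
  one : H
  delta : H →ₗ[k] H ⊗[k] H
  eps : H →ₗ[k] k
  mul_assoc' : ∀ x y z : H, mu (mu (x ⊗ₜ[k] y) ⊗ₜ[k] z) = mu (x ⊗ₜ[k] mu (y ⊗ₜ[k] z))
  one_mul' : ∀ x : H, mu (one ⊗ₜ[k] x) = x
  mul_one' : ∀ x : H, mu (x ⊗ₜ[k] one) = x
  coassoc : ∀ x : H, rTensor H delta (delta x)
      = (TensorProduct.assoc k H H H).symm (lTensor H delta (delta x))
  counit_l : ∀ x : H, TensorProduct.lid k H (rTensor H eps (delta x)) = x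
  counit_r : ∀ x : H, TensorProduct.rid k H (lTensor H eps (delta x)) = x
  a1 : ∀ x y : H, delta (mu (x ⊗ₜ[k] y))
      = TensorProduct.map mu mu (tensorTensorTensorComm k H H H H (delta x ⊗ₜ[k] delta y))
  a2 : ∀ x y z : H, eps (mu (mu (x ⊗ₜ[k] y) ⊗ₜ[k] z))
      = LinearMap.mul' k k (TensorProduct.map (eps ∘ₗ mu)
          ((eps ∘ₗ mu) ∘ₗ (TensorProduct.comm k H H).toLinearMap)
          (tensorTensorTensorComm k H H H H ((x ⊗ₜ[k] z) ⊗ₜ[k] delta y)))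
  a2' : ∀ x y z : H, eps (mu (mu (x ⊗ₜ[k] y) ⊗ₜ[k] z))
      = LinearMap.mul' k k (TensorProduct.map (eps ∘ₗ mu)
          ((eps ∘ₗ mu) ∘ₗ (TensorProduct.comm k H H).toLinearMap)
          (tensorTensorTensorComm k H H H H
            ((x ⊗ₜ[k] z) ⊗ₜ[k] (TensorProduct.comm k H H (delta y)))))
  a3 : rTensor H delta (delta one)
      = rTensor H (lTensor H mu ∘ₗ (TensorProduct.assoc k H H H).toLinearMap)
          ((TensorProduct.assoc k (H ⊗[k] H) H H).symm (delta one ⊗ₜ[k] delta one))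
  a3' : rTensor H delta (delta one)
      = rTensor H (lTensor H (mu ∘ₗ (TensorProduct.comm k H H).toLinearMap)
            ∘ₗ (TensorProduct.assoc k H H H).toLinearMap)
          ((TensorProduct.assoc k (H ⊗[k] H) H H).symm (delta one ⊗ₜ[k] delta one))

variable {k : Type} [CommRing k] {H : Type} [AddCommGroup H] [Module k H]

namespace WeakBialgebraStr

variable (W : WeakBialgebraStr k H)

/-- `ε ∘ μ`. -/
def epsmu : H ⊗[k] H →ₗ[k] k := W.eps ∘ₗ W.mu

/-- The target map `Π^L`, `Π^L(h) = ε(1₍₁₎ h) 1₍₂₎`. -/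
def piL : H →ₗ[k] H :=
  (TensorProduct.lid k H).toLinearMap ∘ₗ rTensor H W.epsmu
    ∘ₗ (TensorProduct.assoc k H H H).symm.toLinearMap
    ∘ₗ lTensor H (TensorProduct.comm k H H).toLinearMap
    ∘ₗ (TensorProduct.assoc k H H H).toLinearMap
    ∘ₗ TensorProduct.mk k (H ⊗[k] H) H (W.delta W.one)

/-- The source map `Π^R`, `Π^R(h) = 1₍₁₎ ε(h 1₍₂₎)`. -/
def piR : H →ₗ[k] H :=
  (TensorProduct.rid k H).toLinearMap ∘ₗ lTensor H W.epsmu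
    ∘ₗ lTensor H (TensorProduct.comm k H H).toLinearMap
    ∘ₗ (TensorProduct.assoc k H H H).toLinearMap
    ∘ₗ TensorProduct.mk k (H ⊗[k] H) H (W.delta W.one)

/-- `Π̄^L(h) = 1₍₁₎ ε(1₍₂₎ h)`. -/
def pibarL : H →ₗ[k] H :=
  (TensorProduct.rid k H).toLinearMap ∘ₗ lTensor H W.epsmu
    ∘ₗ (TensorProduct.assoc k H H H).toLinearMap
    ∘ₗ TensorProduct.mk k (H ⊗[k] H) H (W.delta W.one)

/-- `Π̄^R(h) = ε(h 1₍₁₎) 1₍₂₎`. -/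
def pibarR : H →ₗ[k] H :=
  (TensorProduct.lid k H).toLinearMap ∘ₗ rTensor H W.epsmu
    ∘ₗ (TensorProduct.assoc k H H H).symm.toLinearMap
    ∘ₗ (TensorProduct.comm k (H ⊗[k] H) H).toLinearMap
    ∘ₗ TensorProduct.mk k (H ⊗[k] H) H (W.delta W.one)

end WeakBialgebraStr

/-- A weak Hopf algebra structure: a weak bialgebra with an antipode. -/
structure WeakHopfStr (k : Type) [CommRing k] (H : Type) [AddCommGroup H] [Module k H]
    extends WeakBialgebraStr k H where
  lam : H →ₗ[k] H
  antipode_r : toWeakBialgebraStr.mu ∘ₗ TensorProduct.map LinearMap.id lam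
      ∘ₗ toWeakBialgebraStr.delta = toWeakBialgebraStr.piL
  antipode_l : toWeakBialgebraStr.mu ∘ₗ TensorProduct.map lam LinearMap.id
      ∘ₗ toWeakBialgebraStr.delta = toWeakBialgebraStr.piR
  antipode_inner : toWeakBialgebraStr.mu ∘ₗ TensorProduct.map lam
      (toWeakBialgebraStr.mu ∘ₗ TensorProduct.map LinearMap.id lam
        ∘ₗ toWeakBialgebraStr.delta)
      ∘ₗ toWeakBialgebraStr.delta = lam

/-- Convolution product of two linear maps from a "coalgebra" `(X, D)` into an algebra `B`. -/
def convOn {B : Type} [Ring B] [Algebra k B] {X : Type} [AddCommGroup X] [Module k X]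
    (D : X →ₗ[k] X ⊗[k] X) (f g : X →ₗ[k] B) : X →ₗ[k] B :=
  LinearMap.mul' k B ∘ₗ TensorProduct.map f g ∘ₗ D

/-- Tensor product comultiplication. -/
def deltaT {X Y : Type} [AddCommGroup X] [Module k X] [AddCommGroup Y] [Module k Y]
    (dX : X →ₗ[k] X ⊗[k] X) (dY : Y →ₗ[k] Y ⊗[k] Y) :
    X ⊗[k] Y →ₗ[k] (X ⊗[k] Y) ⊗[k] (X ⊗[k] Y) :=
  (tensorTensorTensorComm k X X Y Y).toLinearMap ∘ₗ TensorProduct.map dX dY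

/-- Comultiplication of `H ⊗ H`. -/
def delta2 (W : WeakBialgebraStr k H) :
    H ⊗[k] H →ₗ[k] (H ⊗[k] H) ⊗[k] (H ⊗[k] H) := deltaT W.delta W.delta

/-- Comultiplication of `H ⊗ (H ⊗ H)`. -/
def delta3 (W : WeakBialgebraStr k H) :
    H ⊗[k] (H ⊗[k] H) →ₗ[k]
      (H ⊗[k] (H ⊗[k] H)) ⊗[k] (H ⊗[k] (H ⊗[k] H)) :=
  deltaT W.delta (delta2 W)

/-- Comultiplication of `H ⊗ (H ⊗ (H ⊗ H))`. -/
def delta4 (W : WeakBialgebraStr k H) :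
    H ⊗[k] (H ⊗[k] (H ⊗[k] H)) →ₗ[k]
      (H ⊗[k] (H ⊗[k] (H ⊗[k] H))) ⊗[k] (H ⊗[k] (H ⊗[k] (H ⊗[k] H))) :=
  deltaT W.delta (delta3 W)

/-- Cocommutativity of the coproduct. -/
def Cocomm (W : WeakBialgebraStr k H) : Prop :=
  ∀ x : H, TensorProduct.comm k H H (W.delta x) = W.delta x

variable {B : Type} [Ring B] [Algebra k B]

/-- A measuring of `H` on `B`. -/
def IsMeasuring (W : WeakBialgebraStr k H) (φ : H ⊗[k] B →ₗ[k] B) : Prop :=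
  ∀ (h : H) (b b' : B), φ (h ⊗ₜ[k] (b * b')) =
    LinearMap.mul' k B (TensorProduct.map φ φ
      (tensorTensorTensorComm k H H B B (W.delta h ⊗ₜ[k] (b ⊗ₜ[k] b'))))

/-- `u₁ = φ ∘ (H ⊗ η_B)`. -/
def u1 (φ : H ⊗[k] B →ₗ[k] B) : H →ₗ[k] B := φ ∘ₗ (TensorProduct.mk k H B).flip 1

/-- `u₂ = φ ∘ (μ_H ⊗ η_B)`. -/
def u2 (W : WeakBialgebraStr k H) (φ : H ⊗[k] B →ₗ[k] B) : H ⊗[k] H →ₗ[k] B :=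
  u1 φ ∘ₗ W.mu

/-- Left weak `H`-module algebra. -/
def IsWMA (W : WeakBialgebraStr k H) (φ : H ⊗[k] B →ₗ[k] B) : Prop :=
  IsMeasuring W φ ∧ (∀ b : B, φ (W.one ⊗ₜ[k] b) = b) ∧
    (∀ x y : H, u1 φ (W.mu (x ⊗ₜ[k] y)) = φ (x ⊗ₜ[k] u1 φ y))

/-- Left `H`-module algebra. -/
def IsMA (W : WeakBialgebraStr k H) (φ : H ⊗[k] B →ₗ[k] B) : Prop :=
  IsMeasuring W φ ∧ (∀ b : B, φ (W.one ⊗ₜ[k] b) = b) ∧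
    (∀ (x y : H) (b : B), φ (W.mu (x ⊗ₜ[k] y) ⊗ₜ[k] b) = φ (x ⊗ₜ[k] φ (y ⊗ₜ[k] b)))

/-- `P_{φ} = (φ ⊗ H) ∘ (H ⊗ c) ∘ (δ ⊗ B)`. -/
def Pmap (W : WeakBialgebraStr k H) (φ : H ⊗[k] B →ₗ[k] B) : H ⊗[k] B →ₗ[k] B ⊗[k] H :=
  rTensor H φ ∘ₗ (TensorProduct.assoc k H B H).symm.toLinearMap
    ∘ₗ lTensor H (TensorProduct.comm k H B).toLinearMap
    ∘ₗ (TensorProduct.assoc k H H B).toLinearMap ∘ₗ rTensor B W.delta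

/-- `F_σ = (σ ⊗ μ_H) ∘ δ_{H⊗H}`. -/
def Fmap (W : WeakBialgebraStr k H) (σ : H ⊗[k] H →ₗ[k] B) : H ⊗[k] H →ₗ[k] B ⊗[k] H :=
  TensorProduct.map σ W.mu ∘ₗ delta2 W

/-- `G_σ = (μ_H ⊗ σ) ∘ δ_{H⊗H}`. -/
def Gmap (W : WeakBialgebraStr k H) (σ : H ⊗[k] H →ₗ[k] B) : H ⊗[k] H →ₗ[k] H ⊗[k] B :=
  TensorProduct.map W.mu σ ∘ₗ delta2 W

/-- `∇_{B⊗H} = (μ_B ⊗ H) ∘ (B ⊗ ((u₁ ⊗ H) ∘ δ_H))`. -/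
def nabla (W : WeakBialgebraStr k H) (φ : H ⊗[k] B →ₗ[k] B) : B ⊗[k] H →ₗ[k] B ⊗[k] H :=
  rTensor H (LinearMap.mul' k B) ∘ₗ (TensorProduct.assoc k B B H).symm.toLinearMap
    ∘ₗ lTensor B (rTensor H (u1 φ) ∘ₗ W.delta)

/-- The twisted condition for `σ`. -/
def IsTwisted (W : WeakBialgebraStr k H) (φ : H ⊗[k] B →ₗ[k] B)
    (σ : H ⊗[k] H →ₗ[k] B) : Prop :=
  LinearMap.mul' k B ∘ₗ lTensor B σ ∘ₗ (TensorProduct.assoc k B H H).toLinearMap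
      ∘ₗ rTensor H (Pmap W φ) ∘ₗ (TensorProduct.assoc k H B H).symm.toLinearMap
      ∘ₗ lTensor H (Pmap W φ)
  = LinearMap.mul' k B ∘ₗ lTensor B φ ∘ₗ (TensorProduct.assoc k B H B).toLinearMap
      ∘ₗ rTensor B (Fmap W σ) ∘ₗ (TensorProduct.assoc k H H B).symm.toLinearMap

/-- The 2-cocycle condition for `σ`. -/
def IsCocycle (W : WeakBialgebraStr k H) (φ : H ⊗[k] B →ₗ[k] B)
    (σ : H ⊗[k] H →ₗ[k] B) : Prop :=
  LinearMap.mul' k B ∘ₗ lTensor B σ ∘ₗ (TensorProduct.assoc k B H H).toLinearMap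
      ∘ₗ rTensor H (Pmap W φ) ∘ₗ (TensorProduct.assoc k H B H).symm.toLinearMap
      ∘ₗ lTensor H (Fmap W σ)
  = LinearMap.mul' k B ∘ₗ lTensor B σ ∘ₗ (TensorProduct.assoc k B H H).toLinearMap
      ∘ₗ rTensor H (Fmap W σ) ∘ₗ (TensorProduct.assoc k H H H).symm.toLinearMap

/-- The Hom-product `φ ∧ ψ = φ ∘ (X ⊗ ψ) ∘ (D ⊗ B)`. -/
def wedgeOn {X : Type} [AddCommGroup X] [Module k X]
    (D : X →ₗ[k] X ⊗[k] X) (f g : X ⊗[k] B →ₗ[k] B) : X ⊗[k] B →ₗ[k] B :=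
  f ∘ₗ lTensor X g ∘ₗ (TensorProduct.assoc k X X B).toLinearMap ∘ₗ rTensor B D

/-- `ω̄ = μ_B ∘ (ω ⊗ B)`. -/
def wbar {X : Type} [AddCommGroup X] [Module k X] (ω : X →ₗ[k] B) : X ⊗[k] B →ₗ[k] B :=
  LinearMap.mul' k B ∘ₗ rTensor B ω

/-- `ω̄^{op} = μ_B ∘ c ∘ (ω ⊗ B)`. -/
def wbarOp {X : Type} [AddCommGroup X] [Module k X] (ω : X →ₗ[k] B) : X ⊗[k] B →ₗ[k] B :=
  LinearMap.mul' k B ∘ₗ (TensorProduct.comm k B B).toLinearMap ∘ₗ rTensor B ω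

/-- `(ω, ωi)` is a regular pair with unit `u`. -/
def RegPair {X : Type} [AddCommGroup X] [Module k X]
    (D : X →ₗ[k] X ⊗[k] X) (u ω ωi : X →ₗ[k] B) : Prop :=
  convOn D ω ωi = u ∧ convOn D ωi ω = u ∧
    convOn D (convOn D ω ωi) ω = ω ∧ convOn D (convOn D ωi ω) ωi = ωi

/-- Coface `∂_{2,0}`. -/
def cf20 (φ : H ⊗[k] B →ₗ[k] B) (σ : H ⊗[k] H →ₗ[k] B) :
    H ⊗[k] (H ⊗[k] H) →ₗ[k] B := φ ∘ₗ lTensor H σ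

/-- Coface `∂_{2,1}`. -/
def cf21 (W : WeakBialgebraStr k H) (σ : H ⊗[k] H →ₗ[k] B) :
    H ⊗[k] (H ⊗[k] H) →ₗ[k] B :=
  σ ∘ₗ rTensor H W.mu ∘ₗ (TensorProduct.assoc k H H H).symm.toLinearMap

/-- Coface `∂_{2,2}`. -/
def cf22 (W : WeakBialgebraStr k H) (σ : H ⊗[k] H →ₗ[k] B) :
    H ⊗[k] (H ⊗[k] H) →ₗ[k] B := σ ∘ₗ lTensor H W.mu

/-- Coface `∂_{2,3}`. -/
def cf23 (W : WeakBialgebraStr k H) (σ : H ⊗[k] H →ₗ[k] B) :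
    H ⊗[k] (H ⊗[k] H) →ₗ[k] B :=
  σ ∘ₗ lTensor H (W.mu ∘ₗ lTensor H W.piL)

/-- Coface `∂_{3,0}`. -/
def cf30 (φ : H ⊗[k] B →ₗ[k] B) (f : H ⊗[k] (H ⊗[k] H) →ₗ[k] B) :
    H ⊗[k] (H ⊗[k] (H ⊗[k] H)) →ₗ[k] B := φ ∘ₗ lTensor H f

/-- Coface `∂_{3,1}`. -/
def cf31 (W : WeakBialgebraStr k H) (f : H ⊗[k] (H ⊗[k] H) →ₗ[k] B) :
    H ⊗[k] (H ⊗[k] (H ⊗[k] H)) →ₗ[k] B :=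
  f ∘ₗ rTensor (H ⊗[k] H) W.mu ∘ₗ (TensorProduct.assoc k H H (H ⊗[k] H)).symm.toLinearMap

/-- Coface `∂_{3,2}`. -/
def cf32 (W : WeakBialgebraStr k H) (f : H ⊗[k] (H ⊗[k] H) →ₗ[k] B) :
    H ⊗[k] (H ⊗[k] (H ⊗[k] H)) →ₗ[k] B :=
  f ∘ₗ lTensor H (rTensor H W.mu ∘ₗ (TensorProduct.assoc k H H H).symm.toLinearMap)

/-- Coface `∂_{3,3}`. -/
def cf33 (W : WeakBialgebraStr k H) (f : H ⊗[k] (H ⊗[k] H) →ₗ[k] B) :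
    H ⊗[k] (H ⊗[k] (H ⊗[k] H)) →ₗ[k] B :=
  f ∘ₗ lTensor H (lTensor H W.mu)

/-- Coface `∂_{3,4}`. -/
def cf34 (W : WeakBialgebraStr k H) (f : H ⊗[k] (H ⊗[k] H) →ₗ[k] B) :
    H ⊗[k] (H ⊗[k] (H ⊗[k] H)) →ₗ[k] B :=
  f ∘ₗ lTensor H (lTensor H (W.mu ∘ₗ lTensor H W.piL))

/-- The pre-obstruction `ω_σ = ∂₂₀(σ) ∗ ∂₂₂(σ) ∗ ∂₂₁(σ⁻¹) ∗ ∂₂₃(σ⁻¹)`. -/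
def preObs (W : WeakBialgebraStr k H) (φ : H ⊗[k] B →ₗ[k] B)
    (σ σi : H ⊗[k] H →ₗ[k] B) : H ⊗[k] (H ⊗[k] H) →ₗ[k] B :=
  convOn (delta3 W)
    (convOn (delta3 W) (convOn (delta3 W) (cf20 φ σ) (cf22 W σ)) (cf21 W σi))
    (cf23 W σi)

/-- Bundled `k`-modules (to form iterated tensor powers). -/
structure ModB (k : Type) [CommRing k] : Type 1 where
  carrier : Type
  [acg : AddCommGroup carrier]
  [mod : Module k carrier]

attribute [instance] ModB.acg ModB.mod

/-- Tensor powers `H^{⊗(n+1)}`. -/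
def HpowM (k : Type) [CommRing k] (H : Type) [AddCommGroup H] [Module k H] : ℕ → ModB k
  | 0 => ⟨H⟩
  | n + 1 => ⟨H ⊗[k] (HpowM k H n).carrier⟩

/-- Comultiplication of `H^{⊗(n+1)}`. -/
def deltaPow (W : WeakBialgebraStr k H) : (n : ℕ) →
    ((HpowM k H n).carrier →ₗ[k] (HpowM k H n).carrier ⊗[k] (HpowM k H n).carrier)
  | 0 => W.delta
  | n + 1 => deltaT W.delta (deltaPow W n)

/-- Iterated multiplication `m : H^{⊗(n+1)} → H`. -/
def mPow (W : WeakBialgebraStr k H) : (n : ℕ) → ((HpowM k H n).carrier →ₗ[k] H)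
  | 0 => LinearMap.id
  | n + 1 => W.mu ∘ₗ lTensor H (mPow W n)

/-- Iterated action `φ^{⊗(n+1)} : H^{⊗(n+1)} ⊗ B → B`. -/
def phiPow (φ : H ⊗[k] B →ₗ[k] B) : (n : ℕ) →
    ((HpowM k H n).carrier ⊗[k] B →ₗ[k] B)
  | 0 => φ
  | n + 1 => φ ∘ₗ lTensor H (phiPow φ n)
      ∘ₗ (TensorProduct.assoc k H (HpowM k H n).carrier B).toLinearMap

/-- `u_{n+1} = u₁ ∘ m^{⊗(n+1)}`. -/
def uPow (W : WeakBialgebraStr k H) (φ : H ⊗[k] B →ₗ[k] B) (n : ℕ) :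
    (HpowM k H n).carrier →ₗ[k] B := u1 φ ∘ₗ mPow W n

end WK

/-!
The Hom-product `∧` (`wedgeOn`) is associative on maps `X ⊗ B → B` as soon as the
comultiplication of `X = H^{⊗n}` is coassociative, and it turns the convolution product into
`ω̄ ∧ ω̄' = (ω ∗ ω')‾`; cocommutativity adds `ω̄ᵒᵖ ∧ ω̄'ᵒᵖ = (ω' ∗ ω)‾ᵒᵖ` and lets
`ω̄` commute with `ω̄'ᵒᵖ`. Since `ū_n ∧ φ^{⊗n} = φ^{⊗n}` and `ū_n = ū_nᵒᵖ`, writing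
`u_n = ω⁻¹ ∗ ω = ω ∗ ω⁻¹` next to `φ^{⊗n}` and commuting the factors moves the symmetry from
`ω` to `ω⁻¹`. Finally `φ^{⊗n}` has a right `∧`-inverse up to `ū_n`, built one tensor factor
at a time from `ψ` with `φ_B ∧ ψ = ū₁`, so the symmetry can be cancelled:
`(ω⁻¹)‾ = (ω⁻¹)‾ᵒᵖ`, i.e. `ω⁻¹` takes central values.

That `u_n` is central comes from `u₁(Π^L h) = u₁(h)` together with
`u₁(Π^L h) c = Π^L(h)·c = c u₁(Π^L h)`; the last two identities are the weak bialgebra axiom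
for `Δ²(1)` (the second one combined with cocommutativity).
-/

namespace WK

variable {k : Type} [CommRing k] {B : Type} [Ring B] [Algebra k B]

section HomProduct

variable {X : Type} [AddCommGroup X] [Module k X]

def IsCoassoc (D : X →ₗ[k] X ⊗[k] X) : Prop :=
  rTensor X D ∘ₗ D = (TensorProduct.assoc k X X X).symm.toLinearMap ∘ₗ lTensor X D ∘ₗ D

def IsCocomm (D : X →ₗ[k] X ⊗[k] X) : Prop :=
  (TensorProduct.comm k X X).toLinearMap ∘ₗ D = D

def slice (f : X ⊗[k] B →ₗ[k] B) (b : B) : X →ₗ[k] B :=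
  f ∘ₗ (TensorProduct.mk k X B).flip b

@[simp] lemma slice_apply (f : X ⊗[k] B →ₗ[k] B) (b : B) (x : X) :
    slice f b x = f (x ⊗ₜ b) := rfl

lemma slice_one (φ : X ⊗[k] B →ₗ[k] B) : slice φ 1 = u1 φ := rfl

variable {D : X →ₗ[k] X ⊗[k] X}

lemma IsCocomm.comm_apply (hD : IsCocomm D) (x : X) : TensorProduct.comm k X X (D x) = D x :=
  LinearMap.congr_fun hD x

lemma convOn_apply (f g : X →ₗ[k] B) (x : X) :
    convOn D f g x = mul' k B (map f g (D x)) := rfl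

@[simp] lemma wbar_tmul (f : X →ₗ[k] B) (x : X) (b : B) : wbar f (x ⊗ₜ b) = f x * b := by
  simp [wbar]

@[simp] lemma wbarOp_tmul (f : X →ₗ[k] B) (x : X) (b : B) : wbarOp f (x ⊗ₜ b) = b * f x := by
  simp [wbarOp]

lemma wedgeOn_tmul (f g : X ⊗[k] B →ₗ[k] B) (x : X) (b : B) :
    wedgeOn D f g (x ⊗ₜ b) = f (lTensor X (slice g b) (D x)) := by
  have : lTensor X g ∘ₗ (TensorProduct.assoc k X X B).toLinearMap
      ∘ₗ (TensorProduct.mk k (X ⊗[k] X) B).flip b = lTensor X (slice g b) := by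
    ext; rfl
  simp [wedgeOn, ← this]

lemma convOn_assoc (hD : IsCoassoc D) (f g p : X →ₗ[k] B) :
    convOn D (convOn D f g) p = convOn D f (convOn D g p) := by
  have hA : (mul' k B ∘ₗ map (mul' k B ∘ₗ map f g) p)
      ∘ₗ (TensorProduct.assoc k X X X).symm.toLinearMap
      = mul' k B ∘ₗ map f (mul' k B ∘ₗ map g p) := by
    ext; simp [mul_assoc]
  calc convOn D (convOn D f g) p
      = (mul' k B ∘ₗ map (mul' k B ∘ₗ map f g) p) ∘ₗ rTensor X D ∘ₗ D := by
        simp only [convOn, ← map_comp_rTensor, rTensor_comp, comp_assoc]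
    _ = convOn D f (convOn D g p) := by
        rw [hD, ← comp_assoc _ (TensorProduct.assoc k X X X).symm.toLinearMap, hA]
        simp only [convOn, ← map_comp_lTensor, lTensor_comp, comp_assoc]

lemma wedgeOn_assoc (hD : IsCoassoc D) (f g p : X ⊗[k] B →ₗ[k] B) :
    wedgeOn D (wedgeOn D f g) p = wedgeOn D f (wedgeOn D g p) := by
  refine TensorProduct.ext' fun x b => ?_
  set G := g ∘ₗ lTensor X (slice p b)
  have hL : wedgeOn D f g ∘ₗ lTensor X (slice p b)
      = f ∘ₗ lTensor X G ∘ₗ (TensorProduct.assoc k X X X).toLinearMap ∘ₗ rTensor X D := by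
    ext y z
    have : lTensor X (slice g (p (z ⊗ₜ b))) = lTensor X G
        ∘ₗ (TensorProduct.assoc k X X X).toLinearMap ∘ₗ (TensorProduct.mk k _ X).flip z := by
      ext; simp [G]
    simp [wedgeOn_tmul, this]
  have hR : slice (wedgeOn D g p) b = G ∘ₗ D := by
    ext y; simp [wedgeOn_tmul, G]
  clear_value G
  calc wedgeOn D (wedgeOn D f g) p (x ⊗ₜ b)
      = (f ∘ₗ lTensor X G ∘ₗ (TensorProduct.assoc k X X X).toLinearMap
          ∘ₗ (rTensor X D ∘ₗ D)) x := by
        rw [wedgeOn_tmul, ← comp_apply (wedgeOn D f g), hL]; rfl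
    _ = wedgeOn D f (wedgeOn D g p) (x ⊗ₜ b) := by
        rw [hD, wedgeOn_tmul, hR, lTensor_comp]
        simp only [comp_apply, LinearEquiv.coe_coe, LinearEquiv.apply_symm_apply]

lemma wedgeOn_wbar_wbar (f g : X →ₗ[k] B) :
    wedgeOn D (wbar f) (wbar g) = wbar (convOn D f g) := by
  refine TensorProduct.ext' fun x b => ?_
  have : wbar f ∘ₗ lTensor X (slice (wbar g) b) = mulRight k b ∘ₗ mul' k B ∘ₗ map f g := by
    ext; simp [mul_assoc]
  simpa [wedgeOn_tmul, convOn_apply] using congr($this (D x))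

lemma wedgeOn_wbarOp_wbarOp (hD : IsCocomm D) (f g : X →ₗ[k] B) :
    wedgeOn D (wbarOp f) (wbarOp g) = wbarOp (convOn D g f) := by
  refine TensorProduct.ext' fun x b => ?_
  have : wbarOp f ∘ₗ lTensor X (slice (wbarOp g) b)
      = mulLeft k b ∘ₗ mul' k B ∘ₗ map g f ∘ₗ (TensorProduct.comm k X X).toLinearMap := by
    ext; simp [mul_assoc]
  simpa [wedgeOn_tmul, convOn_apply, hD.comm_apply] using congr($this (D x))

lemma wedgeOn_wbar_wbarOp_comm (hD : IsCocomm D) (f g : X →ₗ[k] B) :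
    wedgeOn D (wbar f) (wbarOp g) = wedgeOn D (wbarOp g) (wbar f) := by
  refine TensorProduct.ext' fun x b => ?_
  have : wbar f ∘ₗ lTensor X (slice (wbarOp g) b)
      = wbarOp g ∘ₗ lTensor X (slice (wbar f) b) ∘ₗ (TensorProduct.comm k X X).toLinearMap := by
    ext; simp [mul_assoc]
  simpa [wedgeOn_tmul, hD.comm_apply] using congr($this (D x))

variable {u ω ωi : X →ₗ[k] B}

lemma RegPair.convOn_unit_left (h : RegPair D u ω ωi) : convOn D u ωi = ωi := by
  rw [← h.2.1]; exact h.2.2.2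

lemma RegPair.convOn_unit_right (hD : IsCoassoc D) (h : RegPair D u ω ωi) :
    convOn D ωi u = ωi := by
  rw [← h.1, ← convOn_assoc hD, h.2.1, h.convOn_unit_left]

variable {Φ : X ⊗[k] B →ₗ[k] B}

lemma wedgeOn_wbar_eq_wbarOp_of_regPair (hDa : IsCoassoc D) (hDc : IsCocomm D)
    (hΦ : wedgeOn D (wbar u) Φ = Φ) (hcent : wbar u = wbarOp u) (hreg : RegPair D u ω ωi)
    (hω : wedgeOn D (wbar ω) Φ = wedgeOn D (wbarOp ω) Φ) :
    wedgeOn D (wbar ωi) Φ = wedgeOn D (wbarOp ωi) Φ := by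
  calc wedgeOn D (wbar ωi) Φ = wedgeOn D (wbar ωi) (wedgeOn D (wbarOp u) Φ) := by
        rw [← hcent, hΦ]
    _ = wedgeOn D (wedgeOn D (wbar ωi) (wbarOp ωi)) (wedgeOn D (wbarOp ω) Φ) := by
        rw [← hreg.1, ← wedgeOn_wbarOp_wbarOp hDc, wedgeOn_assoc hDa, wedgeOn_assoc hDa]
    _ = wedgeOn D (wbarOp ωi) (wedgeOn D (wbar ωi) (wedgeOn D (wbar ω) Φ)) := by
        rw [wedgeOn_wbar_wbarOp_comm hDc, ← hω, wedgeOn_assoc hDa]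
    _ = wedgeOn D (wbarOp ωi) Φ := by
        rw [← wedgeOn_assoc hDa (wbar ωi), wedgeOn_wbar_wbar, hreg.2.1, hΦ]

lemma wbar_eq_wbarOp_of_regPair (hDa : IsCoassoc D) (hDc : IsCocomm D) {Ψ : X ⊗[k] B →ₗ[k] B}
    (hΦ : wedgeOn D (wbar u) Φ = Φ) (hcent : wbar u = wbarOp u) (hΨ : wedgeOn D Φ Ψ = wbar u)
    (hreg : RegPair D u ω ωi) (hω : wedgeOn D (wbar ω) Φ = wedgeOn D (wbarOp ω) Φ) :
    wbar ωi = wbarOp ωi :=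
  calc wbar ωi = wedgeOn D (wedgeOn D (wbar ωi) Φ) Ψ := by
        rw [wedgeOn_assoc hDa, hΨ, wedgeOn_wbar_wbar, hreg.convOn_unit_right hDa]
    _ = wbarOp ωi := by
        rw [wedgeOn_wbar_eq_wbarOp_of_regPair hDa hDc hΦ hcent hreg hω, wedgeOn_assoc hDa, hΨ,
          hcent, wedgeOn_wbarOp_wbarOp hDc, hreg.convOn_unit_left]

end HomProduct

section TensorCoalgebra

variable {X Y : Type} [AddCommGroup X] [Module k X] [AddCommGroup Y] [Module k Y]
  {dX : X →ₗ[k] X ⊗[k] X} {dY : Y →ₗ[k] Y ⊗[k] Y}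

lemma deltaT_tmul (x : X) (y : Y) :
    deltaT dX dY (x ⊗ₜ y) = tensorTensorTensorComm k X X Y Y (dX x ⊗ₜ dY y) := rfl

lemma rTensor_map_comp_tensorTensorTensorComm {X' Y' : Type} [AddCommGroup X'] [Module k X']
    [AddCommGroup Y'] [Module k Y'] (f : X →ₗ[k] X') (g : Y →ₗ[k] Y') :
    rTensor (X ⊗[k] Y) (map f g) ∘ₗ (tensorTensorTensorComm k X X Y Y).toLinearMap
      = (tensorTensorTensorComm k X' X Y' Y).toLinearMap
        ∘ₗ map (rTensor X f) (rTensor Y g) := by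
  ext; rfl

lemma lTensor_map_comp_tensorTensorTensorComm {X' Y' : Type} [AddCommGroup X'] [Module k X']
    [AddCommGroup Y'] [Module k Y'] (f : X →ₗ[k] X') (g : Y →ₗ[k] Y') :
    lTensor (X ⊗[k] Y) (map f g) ∘ₗ (tensorTensorTensorComm k X X Y Y).toLinearMap
      = (tensorTensorTensorComm k X X' Y Y').toLinearMap
        ∘ₗ map (lTensor X f) (lTensor Y g) := by
  ext; rfl

lemma IsCoassoc.deltaT (hX : IsCoassoc dX) (hY : IsCoassoc dY) : IsCoassoc (deltaT dX dY) := by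
  let T := (tensorTensorTensorComm k X X Y Y).toLinearMap
  have shuffle : rTensor (X ⊗[k] Y) T
        ∘ₗ (tensorTensorTensorComm k (X ⊗[k] X) X (Y ⊗[k] Y) Y).toLinearMap
        ∘ₗ map (TensorProduct.assoc k X X X).symm.toLinearMap
          (TensorProduct.assoc k Y Y Y).symm.toLinearMap
      = (TensorProduct.assoc k (X ⊗[k] Y) (X ⊗[k] Y) (X ⊗[k] Y)).symm.toLinearMap
        ∘ₗ lTensor (X ⊗[k] Y) T
        ∘ₗ (tensorTensorTensorComm k X (X ⊗[k] X) Y (Y ⊗[k] Y)).toLinearMap := by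
    ext; rfl
  calc rTensor _ (WK.deltaT dX dY) ∘ₗ WK.deltaT dX dY
      = rTensor _ T ∘ₗ ((rTensor _ (map dX dY) ∘ₗ T) ∘ₗ map dX dY) := by
        simp only [WK.deltaT, rTensor_comp, comp_assoc]; rfl
    _ = (rTensor _ T ∘ₗ (tensorTensorTensorComm k (X ⊗[k] X) X (Y ⊗[k] Y) Y).toLinearMap)
          ∘ₗ map (rTensor X dX ∘ₗ dX) (rTensor Y dY ∘ₗ dY) := by
        rw [rTensor_map_comp_tensorTensorTensorComm, comp_assoc, ← map_comp, comp_assoc]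
    _ = (TensorProduct.assoc k _ _ _).symm.toLinearMap ∘ₗ lTensor _ T
          ∘ₗ (tensorTensorTensorComm k X (X ⊗[k] X) Y (Y ⊗[k] Y)).toLinearMap
          ∘ₗ map (lTensor X dX ∘ₗ dX) (lTensor Y dY ∘ₗ dY) := by
        rw [hX, hY, map_comp]
        simpa only [comp_assoc] using
          congr($shuffle ∘ₗ map (lTensor X dX ∘ₗ dX) (lTensor Y dY ∘ₗ dY))
    _ = (TensorProduct.assoc k _ _ _).symm.toLinearMap
          ∘ₗ lTensor _ (WK.deltaT dX dY) ∘ₗ WK.deltaT dX dY := by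
        rw [map_comp, ← comp_assoc _ (map _ _), ← lTensor_map_comp_tensorTensorTensorComm]
        simp only [WK.deltaT, lTensor_comp, comp_assoc]; rfl

lemma IsCocomm.deltaT (hX : IsCocomm dX) (hY : IsCocomm dY) : IsCocomm (deltaT dX dY) := by
  have shuffle : (TensorProduct.comm k (X ⊗[k] Y) (X ⊗[k] Y)).toLinearMap
        ∘ₗ (tensorTensorTensorComm k X X Y Y).toLinearMap
      = (tensorTensorTensorComm k X X Y Y).toLinearMap
        ∘ₗ map (TensorProduct.comm k X X).toLinearMap (TensorProduct.comm k Y Y).toLinearMap := by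
    ext; rfl
  unfold IsCocomm WK.deltaT
  rw [← comp_assoc, shuffle, comp_assoc, ← map_comp, hX, hY]

end TensorCoalgebra

section Measuring

variable {X Y : Type} [AddCommGroup X] [Module k X] [AddCommGroup Y] [Module k Y]

/-- `IsMeasuring W φ` is `IsMeasuringOn W.delta φ` by definition. -/
def IsMeasuringOn (D : X →ₗ[k] X ⊗[k] X) (φ : X ⊗[k] B →ₗ[k] B) : Prop :=
  ∀ (x : X) (b b' : B), φ (x ⊗ₜ[k] (b * b')) =
    mul' k B (map φ φ (tensorTensorTensorComm k X X B B (D x ⊗ₜ[k] (b ⊗ₜ[k] b'))))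

def tensorAct (φ : X ⊗[k] B →ₗ[k] B) (Φ : Y ⊗[k] B →ₗ[k] B) :
    (X ⊗[k] Y) ⊗[k] B →ₗ[k] B :=
  φ ∘ₗ lTensor X Φ ∘ₗ (TensorProduct.assoc k X Y B).toLinearMap

def tensorActInv (ψ : X ⊗[k] B →ₗ[k] B) (Ψ : Y ⊗[k] B →ₗ[k] B) :
    (X ⊗[k] Y) ⊗[k] B →ₗ[k] B :=
  Ψ ∘ₗ lTensor Y ψ ∘ₗ (TensorProduct.assoc k Y X B).toLinearMap
    ∘ₗ rTensor B (TensorProduct.comm k X Y).toLinearMap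

@[simp] lemma tensorAct_tmul (φ : X ⊗[k] B →ₗ[k] B) (Φ : Y ⊗[k] B →ₗ[k] B)
    (x : X) (y : Y) (b : B) : tensorAct φ Φ ((x ⊗ₜ y) ⊗ₜ b) = φ (x ⊗ₜ Φ (y ⊗ₜ b)) := rfl

lemma slice_tensorAct (φ : X ⊗[k] B →ₗ[k] B) (Φ : Y ⊗[k] B →ₗ[k] B) (b : B) :
    slice (tensorAct φ Φ) b = φ ∘ₗ lTensor X (slice Φ b) := by
  ext; rfl

variable {D : X →ₗ[k] X ⊗[k] X} {φ : X ⊗[k] B →ₗ[k] B}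

lemma IsMeasuringOn.apply_mul (hφ : IsMeasuringOn D φ) (x : X) (b b' : B) :
    φ (x ⊗ₜ (b * b')) = convOn D (slice φ b) (slice φ b') x := by
  have : mul' k B ∘ₗ map φ φ ∘ₗ (tensorTensorTensorComm k X X B B).toLinearMap
      ∘ₗ (TensorProduct.mk k _ _).flip (b ⊗ₜ b') = mul' k B ∘ₗ map (slice φ b) (slice φ b') := by
    ext; rfl
  rw [hφ, convOn_apply]
  exact congr($this (D x))

lemma IsMeasuringOn.apply_mul' (hφ : IsMeasuringOn D φ) (x : X) (z : B ⊗[k] B) :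
    φ (x ⊗ₜ mul' k B z) = mul' k B (map φ φ (tensorTensorTensorComm k X X B B (D x ⊗ₜ[k] z))) := by
  induction z using TensorProduct.induction_on with
  | zero => simp
  | tmul b b' => simpa using hφ x b b'
  | add z z' hz hz' => simp only [map_add, tmul_add, hz, hz']

lemma IsMeasuringOn.tensorAct {dY : Y →ₗ[k] Y ⊗[k] Y} {Φ : Y ⊗[k] B →ₗ[k] B}
    (hφ : IsMeasuringOn D φ) (hΦ : IsMeasuringOn dY Φ) :
    IsMeasuringOn (deltaT D dY) (WK.tensorAct φ Φ) := by
  intro x b b'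
  induction x using TensorProduct.induction_on with
  | zero => simp
  | add x x' hx hx' => simp only [add_tmul, map_add, hx, hx']
  | tmul x y =>
    have key : mul' k B ∘ₗ map φ φ ∘ₗ (tensorTensorTensorComm k X X B B).toLinearMap
        ∘ₗ lTensor (X ⊗[k] X) (map (slice Φ b) (slice Φ b'))
        = mul' k B ∘ₗ map (WK.tensorAct φ Φ) (WK.tensorAct φ Φ)
          ∘ₗ (tensorTensorTensorComm k _ _ B B).toLinearMap
          ∘ₗ (TensorProduct.mk k _ _).flip (b ⊗ₜ b')
          ∘ₗ (tensorTensorTensorComm k X X Y Y).toLinearMap := by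
      ext; rfl
    rw [tensorAct_tmul, hΦ.apply_mul, convOn_apply, hφ.apply_mul']
    exact congr($key (D x ⊗ₜ dY y))

lemma IsMeasuringOn.wedgeOn_wbar_slice_one (hφ : IsMeasuringOn D φ) :
    wedgeOn D (wbar (slice φ 1)) φ = φ := by
  refine TensorProduct.ext' fun x b => ?_
  have : wbar (slice φ 1) ∘ₗ lTensor X (slice φ b)
      = mul' k B ∘ₗ map (slice φ 1) (slice φ b) := by
    ext; rfl
  simpa [wedgeOn_tmul, ← convOn_apply, ← hφ.apply_mul] using congr($this (D x))

lemma IsMeasuringOn.apply_lTensor_mulLeft_slice (hD : IsCoassoc D) (hφ : IsMeasuringOn D φ)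
    {ψ : X ⊗[k] B →ₗ[k] B} (hψ : wedgeOn D φ ψ = wbar (slice φ 1)) (x : X) (c b : B) :
    φ (lTensor X (mulLeft k c ∘ₗ slice ψ b) (D x)) = φ (x ⊗ₜ c) * b := by
  set F := mul' k B ∘ₗ map (slice φ c) (φ ∘ₗ lTensor X (slice ψ b))
  have hsplit : φ ∘ₗ lTensor X (mulLeft k c ∘ₗ slice ψ b)
      = F ∘ₗ (TensorProduct.assoc k X X X).toLinearMap ∘ₗ rTensor X D := by
    ext x₁ x₂
    have : mul' k B ∘ₗ map (slice φ c) (slice φ (ψ (x₂ ⊗ₜ b))) = F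
        ∘ₗ (TensorProduct.assoc k X X X).toLinearMap ∘ₗ (TensorProduct.mk k _ _).flip x₂ := by
      ext; rfl
    simpa [hφ.apply_mul, convOn_apply] using congr($this (D x₁))
  have hinv : φ ∘ₗ lTensor X (slice ψ b) ∘ₗ D = mulRight k b ∘ₗ slice φ 1 := by
    ext x'
    simpa [wedgeOn_tmul] using congr($hψ (x' ⊗ₜ b))
  have hmul : F ∘ₗ lTensor X D = mulRight k b ∘ₗ mul' k B ∘ₗ map (slice φ c) (slice φ 1) := by
    ext x₁ x₂
    simpa [F, mul_assoc] using congr(φ (x₁ ⊗ₜ c) * $hinv x₂)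
  calc φ (lTensor X (mulLeft k c ∘ₗ slice ψ b) (D x))
      = (F ∘ₗ (TensorProduct.assoc k X X X).toLinearMap ∘ₗ (rTensor X D ∘ₗ D)) x :=
        congr($hsplit (D x))
    _ = φ (x ⊗ₜ c) * b := by
        rw [hD]
        simp only [comp_apply, LinearEquiv.coe_coe, LinearEquiv.apply_symm_apply]
        rw [← comp_apply F, hmul]
        simp only [comp_apply, mulRight_apply, ← convOn_apply, ← hφ.apply_mul, mul_one]

lemma wedgeOn_tensorAct_tensorActInv (hD : IsCoassoc D) (hφ : IsMeasuringOn D φ)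
    {ψ : X ⊗[k] B →ₗ[k] B} (hψ : wedgeOn D φ ψ = wbar (slice φ 1))
    {dY : Y →ₗ[k] Y ⊗[k] Y} {Φ Ψ : Y ⊗[k] B →ₗ[k] B} {v : Y →ₗ[k] B}
    (hΨ : wedgeOn dY Φ Ψ = wbar v) :
    wedgeOn (deltaT D dY) (tensorAct φ Φ) (tensorActInv ψ Ψ) = wbar (φ ∘ₗ lTensor X v) := by
  ext x y b
  have hY : ∀ x₁ x₂ : X, tensorAct φ Φ ∘ₗ lTensor (X ⊗[k] Y) (slice (tensorActInv ψ Ψ) b)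
        ∘ₗ (tensorTensorTensorComm k X X Y Y).toLinearMap
        ∘ₗ TensorProduct.mk k _ _ (x₁ ⊗ₜ x₂)
      = φ ∘ₗ TensorProduct.mk k X B x₁ ∘ₗ Φ ∘ₗ lTensor Y (slice Ψ (ψ (x₂ ⊗ₜ b))) := by
    intro x₁ x₂; ext; rfl
  have hX : tensorAct φ Φ ∘ₗ lTensor (X ⊗[k] Y) (slice (tensorActInv ψ Ψ) b)
        ∘ₗ (tensorTensorTensorComm k X X Y Y).toLinearMap
        ∘ₗ (TensorProduct.mk k _ _).flip (dY y)
      = φ ∘ₗ lTensor X (mulLeft k (v y) ∘ₗ slice ψ b) := by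
    ext x₁ x₂
    simpa [← wedgeOn_tmul, hΨ] using congr($(hY x₁ x₂) (dY y))
  simpa [wedgeOn_tmul, deltaT_tmul, hφ.apply_lTensor_mulLeft_slice hD hψ]
    using congr($hX (D x))

end Measuring

section Centrality

variable {H : Type} [AddCommGroup H] [Module k H]

/-- `e ↦ Σ 1₁ e ⊗ 1₂`, i.e. `Δ(1) (e ⊗ 1)`. -/
def WeakBialgebraStr.deltaOneMul (W : WeakBialgebraStr k H) : H →ₗ[k] H ⊗[k] H :=
  rTensor H W.mu ∘ₗ (TensorProduct.assoc k H H H).symm.toLinearMap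
    ∘ₗ lTensor H (TensorProduct.comm k H H).toLinearMap
    ∘ₗ (TensorProduct.assoc k H H H).toLinearMap
    ∘ₗ TensorProduct.mk k (H ⊗[k] H) H (W.delta W.one)

variable {W : WeakBialgebraStr k H}

namespace WeakBialgebraStr

lemma deltaOneMul_apply (e : H) :
    W.deltaOneMul e = rTensor H (W.mu ∘ₗ (TensorProduct.mk k H H).flip e) (W.delta W.one) := by
  have : rTensor H W.mu ∘ₗ (TensorProduct.assoc k H H H).symm.toLinearMap
      ∘ₗ lTensor H (TensorProduct.comm k H H).toLinearMap
      ∘ₗ (TensorProduct.assoc k H H H).toLinearMap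
      ∘ₗ (TensorProduct.mk k (H ⊗[k] H) H).flip e
      = rTensor H (W.mu ∘ₗ (TensorProduct.mk k H H).flip e) := by
    ext; rfl
  exact congr($this (W.delta W.one))

lemma piL_apply (h : H) :
    W.piL h = TensorProduct.lid k H
      (rTensor H (W.epsmu ∘ₗ (TensorProduct.mk k H H).flip h) (W.delta W.one)) := by
  have : (TensorProduct.lid k H).toLinearMap ∘ₗ rTensor H W.epsmu
      ∘ₗ (TensorProduct.assoc k H H H).symm.toLinearMap
      ∘ₗ lTensor H (TensorProduct.comm k H H).toLinearMap
      ∘ₗ (TensorProduct.assoc k H H H).toLinearMap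
      ∘ₗ (TensorProduct.mk k (H ⊗[k] H) H).flip h
      = (TensorProduct.lid k H).toLinearMap
        ∘ₗ rTensor H (W.epsmu ∘ₗ (TensorProduct.mk k H H).flip h) := by
    ext; rfl
  exact congr($this (W.delta W.one))

/-- The axiom `a3'`, `Δ²(1) = Σ 1₁ ⊗ 1'₁ 1₂ ⊗ 1'₂`, read through coassociativity. -/
lemma lTensor_deltaOneMul_delta_one :
    lTensor H W.deltaOneMul (W.delta W.one) = lTensor H W.delta (W.delta W.one) := by
  set A := (TensorProduct.assoc k H H H).toLinearMap
    ∘ₗ rTensor H (lTensor H (W.mu ∘ₗ (TensorProduct.comm k H H).toLinearMap)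
      ∘ₗ (TensorProduct.assoc k H H H).toLinearMap)
    ∘ₗ (TensorProduct.assoc k (H ⊗[k] H) H H).symm.toLinearMap
  have hA : lTensor H W.deltaOneMul = A ∘ₗ (TensorProduct.mk k _ _).flip (W.delta W.one) := by
    ext a e
    have : TensorProduct.mk k H (H ⊗[k] H) a ∘ₗ rTensor H W.mu
        ∘ₗ (TensorProduct.assoc k H H H).symm.toLinearMap
        ∘ₗ lTensor H (TensorProduct.comm k H H).toLinearMap
        ∘ₗ (TensorProduct.assoc k H H H).toLinearMap
        ∘ₗ (TensorProduct.mk k (H ⊗[k] H) H).flip e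
        = A ∘ₗ TensorProduct.mk k _ _ (a ⊗ₜ e) := by
      ext; rfl
    exact congr($this (W.delta W.one))
  have := congr((TensorProduct.assoc k H H H) $(W.a3'))
  rw [W.coassoc, LinearEquiv.apply_symm_apply] at this
  rw [hA, this]
  rfl

lemma lTensor_comp_deltaOneMul {M : Type} [AddCommGroup M] [Module k M]
    (G : H ⊗[k] H →ₗ[k] M) :
    lTensor H (G ∘ₗ W.deltaOneMul) (W.delta W.one)
      = lTensor H (G ∘ₗ W.delta) (W.delta W.one) := by
  rw [lTensor_comp, lTensor_comp, comp_apply, comp_apply, lTensor_deltaOneMul_delta_one]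

lemma apply_piL_eq_of_lTensor_eq {M : Type} [AddCommGroup M] [Module k M] {F F' : H →ₗ[k] M}
    (hF : lTensor H F (W.delta W.one) = lTensor H F' (W.delta W.one)) (h : H) :
    F (W.piL h) = F' (W.piL h) := by
  set ε_h := W.epsmu ∘ₗ (TensorProduct.mk k H H).flip h
  have hP : ∀ F : H →ₗ[k] M, F (W.piL h)
      = TensorProduct.lid k M (rTensor M ε_h (lTensor H F (W.delta W.one))) := by
    intro F
    have : F ∘ₗ (TensorProduct.lid k H).toLinearMap ∘ₗ rTensor H ε_h
        = (TensorProduct.lid k M).toLinearMap ∘ₗ rTensor M ε_h ∘ₗ lTensor H F := by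
      ext; simp
    rw [piL_apply]
    exact congr($this (W.delta W.one))
  rw [hP, hP F', hF]

lemma mu_rTensor_piL_delta (x : H) : W.mu (rTensor H W.piL (W.delta x)) = x := by
  have : W.mu ∘ₗ rTensor H W.piL = (TensorProduct.lid k H).toLinearMap ∘ₗ rTensor H W.eps
      ∘ₗ map W.mu W.mu ∘ₗ (tensorTensorTensorComm k H H H H).toLinearMap
      ∘ₗ TensorProduct.mk k _ _ (W.delta W.one) := by
    ext p q
    have : W.mu ∘ₗ (TensorProduct.mk k H H).flip q ∘ₗ (TensorProduct.lid k H).toLinearMap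
        ∘ₗ rTensor H (W.epsmu ∘ₗ (TensorProduct.mk k H H).flip p)
        = (TensorProduct.lid k H).toLinearMap ∘ₗ rTensor H W.eps
          ∘ₗ map W.mu W.mu ∘ₗ (tensorTensorTensorComm k H H H H).toLinearMap
          ∘ₗ (TensorProduct.mk k _ _).flip (p ⊗ₜ q) := by
      ext; simp [epsmu]
    simpa [piL_apply] using congr($this (W.delta W.one))
  rw [← comp_apply (W.mu), this]
  simp [← W.a1, W.one_mul', W.counit_l]

lemma rTensor_delta_delta_swap (hco : Cocomm W) (x : H) :
    ((TensorProduct.assoc k H H H).symm.toLinearMap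
      ∘ₗ lTensor H (TensorProduct.comm k H H).toLinearMap
      ∘ₗ (TensorProduct.assoc k H H H).toLinearMap) (rTensor H W.delta (W.delta x))
      = rTensor H W.delta (W.delta x) := by
  have hc : (TensorProduct.comm k H H).toLinearMap ∘ₗ W.delta = W.delta := LinearMap.ext hco
  simp only [comp_apply, W.coassoc x, LinearEquiv.coe_coe, LinearEquiv.apply_symm_apply,
    ← lTensor_comp_apply, hc]

end WeakBialgebraStr

variable {φ : H ⊗[k] B →ₗ[k] B}

lemma IsWMA.isMeasuringOn (hφ : IsWMA W φ) : IsMeasuringOn W.delta φ := hφ.1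

lemma IsWMA.one_tmul (hφ : IsWMA W φ) (b : B) : φ (W.one ⊗ₜ b) = b := hφ.2.1 b

lemma IsWMA.u1_mu (hφ : IsWMA W φ) (x y : H) : u1 φ (W.mu (x ⊗ₜ y)) = φ (x ⊗ₜ u1 φ y) :=
  hφ.2.2 x y

lemma IsWMA.slice_u1 (hφ : IsWMA W φ) (e : H) :
    slice φ (u1 φ e) = u1 φ ∘ₗ W.mu ∘ₗ (TensorProduct.mk k H H).flip e := by
  ext a; exact (hφ.u1_mu a e).symm

lemma IsWMA.u1_mul_eq (hφ : IsWMA W φ) (e : H) (c : B) :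
    u1 φ e * c = mul' k B (map (u1 φ) (slice φ c) (W.deltaOneMul e)) := by
  rw [← hφ.one_tmul (u1 φ e * c), hφ.isMeasuringOn.apply_mul, convOn_apply, hφ.slice_u1,
    W.deltaOneMul_apply, map_rTensor]

lemma IsWMA.mul_u1_eq (hco : Cocomm W) (hφ : IsWMA W φ) (e : H) (c : B) :
    c * u1 φ e
      = mul' k B (TensorProduct.comm k B B (map (u1 φ) (slice φ c) (W.deltaOneMul e))) := by
  rw [W.deltaOneMul_apply, map_rTensor, ← TensorProduct.map_comm, hco W.one, ← hφ.slice_u1,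
    ← convOn_apply, ← hφ.isMeasuringOn.apply_mul, hφ.one_tmul]

lemma IsWMA.u1_piL_mul (hφ : IsWMA W φ) (h : H) (c : B) :
    u1 φ (W.piL h) * c = φ (W.piL h ⊗ₜ c) := by
  set G := mul' k B ∘ₗ map (u1 φ) (slice φ c)
  have hF : mulRight k c ∘ₗ u1 φ = G ∘ₗ W.deltaOneMul := by
    ext e; exact hφ.u1_mul_eq e c
  have hG : G ∘ₗ W.delta = slice φ c := by
    ext y
    simpa [G, convOn_apply, slice_one] using (hφ.isMeasuringOn.apply_mul y 1 c).symm
  exact W.apply_piL_eq_of_lTensor_eq (F := mulRight k c ∘ₗ u1 φ) (F' := slice φ c)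
    (by rw [hF, W.lTensor_comp_deltaOneMul, hG]) h

lemma IsWMA.mul_u1_piL (hco : Cocomm W) (hφ : IsWMA W φ) (h : H) (c : B) :
    c * u1 φ (W.piL h) = φ (W.piL h ⊗ₜ c) := by
  set G := mul' k B ∘ₗ (TensorProduct.comm k B B).toLinearMap ∘ₗ map (u1 φ) (slice φ c)
  have hF : mulLeft k c ∘ₗ u1 φ = G ∘ₗ W.deltaOneMul := by
    ext e; exact hφ.mul_u1_eq hco e c
  have hG : G ∘ₗ W.delta = slice φ c := by
    ext y
    rw [comp_apply, ← hco y]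
    simpa [G, TensorProduct.map_comm, convOn_apply, slice_one]
      using (hφ.isMeasuringOn.apply_mul y c 1).symm
  exact W.apply_piL_eq_of_lTensor_eq (F := mulLeft k c ∘ₗ u1 φ) (F' := slice φ c)
    (by rw [hF, W.lTensor_comp_deltaOneMul, hG]) h

lemma IsWMA.mul'_map_u1_piL_delta (hφ : IsWMA W φ) (x : H) :
    mul' k B (map (u1 φ ∘ₗ W.piL) (u1 φ) (W.delta x)) = u1 φ x := by
  have : mul' k B ∘ₗ map (u1 φ ∘ₗ W.piL) (u1 φ) = u1 φ ∘ₗ W.mu ∘ₗ rTensor H W.piL := by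
    ext p q
    simp [hφ.u1_piL_mul, hφ.u1_mu]
  rw [← comp_apply (mul' k B), this]
  simp [W.mu_rTensor_piL_delta]

/-- By the antipode axiom and a measuring step, `u₁(Π^L h) = Σ φ(h₁ ⊗ u₁(λ h₃)) u₁(h₂)`;
cocommutativity swaps `h₂` and `h₃`, which leaves `Σ u₁(Π^L h₁) u₁(h₂) = u₁(h)`. -/
lemma IsWMA.u1_piL {Wh : WeakHopfStr k H} (hco : Cocomm Wh.toWeakBialgebraStr)
    (hφ : IsWMA Wh.toWeakBialgebraStr φ) (h : H) : u1 φ (Wh.piL h) = u1 φ h := by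
  set G := u1 φ ∘ₗ Wh.lam
  set Q := mul' k B ∘ₗ map (φ ∘ₗ lTensor H G) (u1 φ)
  set swap := (TensorProduct.assoc k H H H).symm.toLinearMap
    ∘ₗ lTensor H (TensorProduct.comm k H H).toLinearMap
    ∘ₗ (TensorProduct.assoc k H H H).toLinearMap
  have hpiL : u1 φ ∘ₗ Wh.piL = φ ∘ₗ lTensor H G ∘ₗ Wh.delta := by
    have : u1 φ ∘ₗ Wh.mu = φ ∘ₗ lTensor H (u1 φ) := TensorProduct.ext' hφ.u1_mu
    rw [← Wh.antipode_r, ← comp_assoc, this]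
    simp only [G, lTensor_comp, comp_assoc]
    rfl
  have hsplit : φ ∘ₗ lTensor H G = Q ∘ₗ swap ∘ₗ rTensor H Wh.delta := by
    refine TensorProduct.ext' fun a b => ?_
    have : mul' k B ∘ₗ map (slice φ (G b)) (u1 φ)
        = Q ∘ₗ swap ∘ₗ (TensorProduct.mk k _ _).flip b := by
      ext; rfl
    rw [comp_apply, lTensor_tmul, ← mul_one (G b), hφ.isMeasuringOn.apply_mul, convOn_apply,
      slice_one]
    exact congr($this (Wh.delta a))
  calc u1 φ (Wh.piL h) = (φ ∘ₗ lTensor H G) (Wh.delta h) := congr($hpiL h)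
    _ = Q (rTensor H Wh.delta (Wh.delta h)) := by
        rw [hsplit]
        exact congr(Q $(Wh.rTensor_delta_delta_swap hco h))
    _ = u1 φ h := by
        rw [comp_apply, map_rTensor, comp_assoc, ← hpiL, hφ.mul'_map_u1_piL_delta]

lemma IsWMA.u1_mul_comm {Wh : WeakHopfStr k H} (hco : Cocomm Wh.toWeakBialgebraStr)
    (hφ : IsWMA Wh.toWeakBialgebraStr φ) (h : H) (c : B) : u1 φ h * c = c * u1 φ h := by
  rw [← hφ.u1_piL hco, hφ.u1_piL_mul, hφ.mul_u1_piL hco]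

end Centrality

section TensorPower

variable {H : Type} [AddCommGroup H] [Module k H] {W : WeakBialgebraStr k H}
  {φ : H ⊗[k] B →ₗ[k] B}

lemma isCoassoc_deltaPow : ∀ n, IsCoassoc (deltaPow W n)
  | 0 => LinearMap.ext W.coassoc
  | n + 1 => IsCoassoc.deltaT (LinearMap.ext W.coassoc) (isCoassoc_deltaPow n)

lemma isCocomm_deltaPow (hco : Cocomm W) : ∀ n, IsCocomm (deltaPow W n)
  | 0 => LinearMap.ext hco
  | n + 1 => IsCocomm.deltaT (LinearMap.ext hco) (isCocomm_deltaPow hco n)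

lemma isMeasuringOn_phiPow (hm : IsMeasuring W φ) :
    ∀ n, IsMeasuringOn (deltaPow W n) (phiPow φ n)
  | 0 => hm
  | n + 1 => IsMeasuringOn.tensorAct hm (isMeasuringOn_phiPow hm n)

lemma comp_lTensor_uPow (hn : ∀ x y : H, u1 φ (W.mu (x ⊗ₜ[k] y)) = φ (x ⊗ₜ[k] u1 φ y))
    (n : ℕ) : φ ∘ₗ lTensor H (uPow W φ n) = uPow W φ (n + 1) :=
  TensorProduct.ext' fun x y => (hn x (mPow W n y)).symm

lemma slice_phiPow_one (hn : ∀ x y : H, u1 φ (W.mu (x ⊗ₜ[k] y)) = φ (x ⊗ₜ[k] u1 φ y)) :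
    ∀ n, slice (phiPow φ n) 1 = uPow W φ n
  | 0 => rfl
  | n + 1 => by
    show slice (tensorAct φ (phiPow φ n)) 1 = _
    rw [slice_tensorAct, slice_phiPow_one hn n, comp_lTensor_uPow hn]

lemma wedgeOn_wbar_uPow_phiPow (hm : IsMeasuring W φ)
    (hn : ∀ x y : H, u1 φ (W.mu (x ⊗ₜ[k] y)) = φ (x ⊗ₜ[k] u1 φ y)) (n : ℕ) :
    wedgeOn (deltaPow W n) (wbar (uPow W φ n)) (phiPow φ n) = phiPow φ n := by
  rw [← slice_phiPow_one hn]
  exact (isMeasuringOn_phiPow hm n).wedgeOn_wbar_slice_one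

def phiInvPow (ψ : H ⊗[k] B →ₗ[k] B) : (n : ℕ) → (HpowM k H n).carrier ⊗[k] B →ₗ[k] B
  | 0 => ψ
  | n + 1 => tensorActInv ψ (phiInvPow ψ n)

lemma wedgeOn_phiPow_phiInvPow (hm : IsMeasuring W φ)
    (hn : ∀ x y : H, u1 φ (W.mu (x ⊗ₜ[k] y)) = φ (x ⊗ₜ[k] u1 φ y))
    {ψ : H ⊗[k] B →ₗ[k] B} (hψ : wedgeOn W.delta φ ψ = wbar (u1 φ)) :
    ∀ n, wedgeOn (deltaPow W n) (phiPow φ n) (phiInvPow ψ n) = wbar (uPow W φ n)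
  | 0 => hψ
  | n + 1 => by
    rw [← comp_lTensor_uPow hn]
    exact wedgeOn_tensorAct_tensorActInv (LinearMap.ext W.coassoc) hm hψ
      (wedgeOn_phiPow_phiInvPow hm hn hψ n)

lemma IsWMA.wbar_uPow_eq_wbarOp {Wh : WeakHopfStr k H} (hco : Cocomm Wh.toWeakBialgebraStr)
    (hφ : IsWMA Wh.toWeakBialgebraStr φ) (n : ℕ) :
    wbar (uPow Wh.toWeakBialgebraStr φ n) = wbarOp (uPow Wh.toWeakBialgebraStr φ n) :=
  TensorProduct.ext' fun x b => by
    simpa [uPow] using hφ.u1_mul_comm hco (mPow Wh.toWeakBialgebraStr n x) b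

end TensorPower

end WK

open WK in
theorem statement14 {k : Type} [CommRing k] {H : Type} [AddCommGroup H] [Module k H]
    {B : Type} [Ring B] [Algebra k B]
    (W : WeakHopfStr k H) (hco : Cocomm W.toWeakBialgebraStr)
    (φ : H ⊗[k] B →ₗ[k] B) (hφ : IsWMA W.toWeakBialgebraStr φ)
    (hinv : ∃ φd : H ⊗[k] B →ₗ[k] B,
      wedgeOn W.toWeakBialgebraStr.delta φ φd = wbar (u1 φ))
    (n : ℕ) (ω ωi : (HpowM k H n).carrier →ₗ[k] B)
    (hreg : RegPair (deltaPow W.toWeakBialgebraStr n)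
      (uPow W.toWeakBialgebraStr φ n) ω ωi)
    (hω : wedgeOn (deltaPow W.toWeakBialgebraStr n) (wbar ω) (phiPow φ n)
        = wedgeOn (deltaPow W.toWeakBialgebraStr n) (wbarOp ω) (phiPow φ n)) :
    wedgeOn (deltaPow W.toWeakBialgebraStr n) (wbar ωi) (phiPow φ n)
        = wedgeOn (deltaPow W.toWeakBialgebraStr n) (wbarOp ωi) (phiPow φ n) ∧
    ∀ (x : (HpowM k H n).carrier) (b : B), ωi x * b = b * ωi x := by
  obtain ⟨ψ, hψ⟩ := hinv
  have hDa := isCoassoc_deltaPow (W := W.toWeakBialgebraStr) n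
  have hDc := isCocomm_deltaPow hco n
  have hΦ := wedgeOn_wbar_uPow_phiPow hφ.1 hφ.u1_mu n
  have hcent := hφ.wbar_uPow_eq_wbarOp hco n
  have hΨ := wedgeOn_phiPow_phiInvPow hφ.1 hφ.u1_mu hψ n
  refine ⟨wedgeOn_wbar_eq_wbarOp_of_regPair hDa hDc hΦ hcent hreg hω, fun x b => ?_⟩
  simpa using congr($(wbar_eq_wbarOp_of_regPair hDa hDc hΦ hcent hΨ hreg hω) (x ⊗ₜ b))
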